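/- Fix an integer d ≥ 1. The improper integral ∫_1^∞ (e^{-2t/d} I₀(2t/d))^d dt is finite if and only if d ≥ 3. (This expresses that the expected number of collisions of two independent simple random walkers on ℤ^d is finite if and only if d ≥ 3.) -/

import Mathlib

open Real MeasureTheory
open scoped Nat

noncomputable def I₀ (z : ℝ) : ℝ := ∑' k : ℕ, (1 / ((k)! : ℝ) ^ 2) * (z / 2) ^ (2 * k)


lemma I0_term_nonneg (z : ℝ) (k : ℕ) : 0 ≤ (1 / ((k)! : ℝ) ^ 2) * (z / 2) ^ (2 * k) := by
  have : (z / 2) ^ (2 * k) = ((z / 2) ^ 2) ^ k := by rw [← pow_mul]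
  rw [this]; positivity

lemma I0_summable (z : ℝ) :
    Summable (fun k : ℕ => (1 / ((k)! : ℝ) ^ 2) * (z / 2) ^ (2 * k)) := by
  have hsum : Summable (fun k : ℕ => ((z / 2) ^ 2) ^ k / (k)! : ℕ → ℝ) :=
    Real.summable_pow_div_factorial _
  refine Summable.of_nonneg_of_le (I0_term_nonneg z) (fun k => ?_) hsum
  have hk : (0:ℝ) < (k)! := by exact_mod_cast (k.factorial_pos)
  rw [pow_mul, one_div, inv_mul_eq_div]
  have hk1 : (1:ℝ) ≤ (k)! := by exact_mod_cast Nat.one_le_iff_ne_zero.mpr (Nat.factorial_ne_zero k)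
  gcongr
  nlinarith [hk1]

lemma I0_nonneg (z : ℝ) : 0 ≤ I₀ z := tsum_nonneg (I0_term_nonneg z)

lemma measurable_I0 : Measurable I₀ := by
  apply measurable_of_tendsto_metrizable
    (f := fun n (z : ℝ) => ∑ k ∈ Finset.range n, (1 / ((k)! : ℝ) ^ 2) * (z / 2) ^ (2 * k))
  · intro n
    exact Finset.measurable_sum _ (fun k _ => (by fun_prop : Measurable fun z : ℝ => (1 / ((k)! : ℝ) ^ 2) * (z / 2) ^ (2 * k)))
  · rw [tendsto_pi_nhds]
    intro z
    exact (I0_summable z).hasSum.tendsto_sum_nat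

lemma prod_ratio (k : ℕ) : ∏ i ∈ Finset.range k, (2 * (i:ℝ) + 1) / (2 * i + 2)
    = ((2*k)! : ℝ) / ((4:ℝ)^k * ((k)! : ℝ)^2) := by
  induction k with
  | zero => simp
  | succ n ih =>
    rw [Finset.prod_range_succ, ih]
    have h1 : ((2*(n+1))! : ℝ) = ((2*n)! : ℝ) * (2*n+1) * (2*n+2) := by
      have : 2*(n+1) = (2*n+1)+1 := by ring
      rw [this, Nat.factorial_succ, Nat.factorial_succ]
      push_cast; ring
    have h2 : (((n+1))! : ℝ) = ((n)! : ℝ) * (n+1) := by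
      rw [Nat.factorial_succ]; push_cast; ring
    have hf : ((n)! : ℝ) ≠ 0 := by exact_mod_cast (Nat.factorial_pos n).ne'
    have h4 : ((4:ℝ))^n ≠ 0 := by positivity
    rw [h1, h2]
    field_simp
    ring

lemma cos_int_odd (k : ℕ) : (∫ x in (0:ℝ)..π, Real.cos x ^ (2*k+1)) = 0 := by
  have h := intervalIntegral.integral_comp_sub_left (fun x => Real.cos x ^ (2*k+1)) π
    (a := 0) (b := π)
  simp only [sub_zero, sub_self] at h
  have h2 : (∫ x in (0:ℝ)..π, Real.cos (π - x) ^ (2*k+1))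
      = ∫ x in (0:ℝ)..π, -(Real.cos x ^ (2*k+1)) := by
    congr 1; funext x
    rw [Real.cos_pi_sub]
    exact Odd.neg_pow ⟨k, by ring⟩ _
  rw [h2, intervalIntegral.integral_neg] at h
  linarith

lemma cos_int_even_eq_sin (k : ℕ) : (∫ x in (0:ℝ)..π, Real.cos x ^ (2*k)) = ∫ x in (0:ℝ)..π, Real.sin x ^ (2*k) := by
  have hci : ∀ a b : ℝ, IntervalIntegrable (fun x => Real.cos x ^ (2*k)) volume a b :=
    fun a b => (Real.continuous_cos.pow _).intervalIntegrable a b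
  -- ∫₀^π sin^{2k} = ∫_{-π/2}^{π/2} cos^{2k}
  have h1 : (∫ x in (0:ℝ)..π, Real.sin x ^ (2*k))
      = ∫ x in (-(π/2))..(π/2), Real.cos x ^ (2*k) := by
    have h := intervalIntegral.integral_comp_sub_right
      (fun x => Real.cos x ^ (2*k)) (π/2) (a := 0) (b := π)
    have h2 : (∫ x in (0:ℝ)..π, Real.cos (x - π/2) ^ (2*k))
        = ∫ x in (0:ℝ)..π, Real.sin x ^ (2*k) := by
      congr 1; funext x
      rw [show x - π/2 = -(π/2 - x) by ring, Real.cos_neg, Real.cos_pi_div_two_sub]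
    rw [h2] at h
    rw [h]
    congr 1 <;> ring
  -- ∫_{π/2}^{π} cos^{2k} = ∫_{-π/2}^{0} cos^{2k}
  have h3 : (∫ x in (π/2)..π, Real.cos x ^ (2*k))
      = ∫ x in (-(π/2))..(0:ℝ), Real.cos x ^ (2*k) := by
    have h := intervalIntegral.integral_comp_add_right
      (fun x => Real.cos x ^ (2*k)) π (a := -(π/2)) (b := 0)
    have h2 : (∫ x in (-(π/2))..(0:ℝ), Real.cos (x + π) ^ (2*k))
        = ∫ x in (-(π/2))..(0:ℝ), Real.cos x ^ (2*k) := by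
      congr 1; funext x
      rw [Real.cos_add_pi, Even.neg_pow ⟨k, by ring⟩]
    rw [show -(π/2)+π = π/2 by ring, show (0:ℝ)+π = π by ring] at h
    rw [← h, h2]
  have h4 := intervalIntegral.integral_add_adjacent_intervals
    (a := (0:ℝ)) (b := π/2) (c := π) (hci 0 (π/2)) (hci (π/2) π)
  have h5 := intervalIntegral.integral_add_adjacent_intervals
    (a := -(π/2)) (b := 0) (c := π/2) (hci (-(π/2)) 0) (hci 0 (π/2))
  rw [h1, ← h5, ← h4, h3]
  ring


lemma cos_int_even (k : ℕ) :
    (∫ x in (0:ℝ)..π, Real.cos x ^ (2*k)) = π * (((2*k)! : ℝ) / ((4:ℝ)^k * ((k)! : ℝ)^2)) := by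
  rw [cos_int_even_eq_sin, integral_sin_pow_even, prod_ratio]

lemma I0_repr (x : ℝ) : π * I₀ x = ∫ θ in (0:ℝ)..π, Real.exp (x * Real.cos θ) := by
  have hπ := Real.pi_pos
  set F : ℕ → ℝ → ℝ := fun n θ => (x * Real.cos θ)^n / (n)! with hF
  set μ : Measure ℝ := volume.restrict (Set.Ioc 0 π) with hμ
  have hFc : ∀ n, Continuous (F n) := fun n => by fun_prop
  have hInt : ∀ n, Integrable (F n) μ :=
    fun n => ((hFc n).intervalIntegrable 0 π).1
  have hbound : ∀ n, (∫ θ, ‖F n θ‖ ∂μ) ≤ |x|^n / (n)! * π := by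
    intro n
    have hle : ∀ θ, ‖F n θ‖ ≤ |x|^n / (n)! := by
      intro θ
      rw [hF]
      simp only [norm_div, norm_pow, Real.norm_eq_abs, abs_mul]
      gcongr
      · calc |x| * |Real.cos θ| ≤ |x| * 1 :=
              mul_le_mul_of_nonneg_left (Real.abs_cos_le_one θ) (abs_nonneg x)
          _ = |x| := mul_one _
      · rw [Nat.abs_cast]
    calc (∫ θ, ‖F n θ‖ ∂μ) ≤ ∫ _, |x|^n / (n)! ∂μ := by
          apply integral_mono ((hInt n).norm) (integrable_const _) hle
      _ = |x|^n / (n)! * π := by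
          rw [integral_const, hμ]
          simp [Measure.restrict_apply, Real.volume_Ioc, hπ.le, smul_eq_mul]
          ring
  have hsum : Summable fun n => ∫ θ, ‖F n θ‖ ∂μ := by
    refine Summable.of_nonneg_of_le (fun n => ?_) hbound
      (((Real.summable_pow_div_factorial |x|)).mul_right π)
    exact integral_nonneg (fun θ => norm_nonneg _)
  have hswap := MeasureTheory.integral_tsum_of_summable_integral_norm hInt hsum
  have hexp : ∀ θ : ℝ, (∑' n, F n θ) = Real.exp (x * Real.cos θ) := by
    intro θ
    rw [Real.exp_eq_exp_ℝ, NormedSpace.exp_eq_tsum_div]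
  have hterm : ∀ n, (∫ θ, F n θ ∂μ) = x^n / (n)! * ∫ θ in (0:ℝ)..π, Real.cos θ ^ n := by
    intro n
    rw [← intervalIntegral.integral_of_le hπ.le, ← intervalIntegral.integral_const_mul]
    congr 1; funext θ
    rw [hF]; simp only [mul_pow]; ring
  -- tsum computation
  have heven : (fun k => x^(2*k) / ((2*k))! * ∫ θ in (0:ℝ)..π, Real.cos θ ^ (2*k))
      = fun k => π * ((1 / ((k)! : ℝ) ^ 2) * (x / 2) ^ (2 * k)) := by
    funext k
    rw [cos_int_even k]
    have h2 : ((2*k)! : ℝ) ≠ 0 := by exact_mod_cast (Nat.factorial_pos _).ne'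
    have h3 : ((k)! : ℝ) ≠ 0 := by exact_mod_cast (Nat.factorial_pos _).ne'
    have h4 : (x / 2) ^ (2 * k) = x ^ (2*k) / (4:ℝ)^k := by
      rw [div_pow, pow_mul, pow_mul]; norm_num
    rw [h4]
    field_simp
  have hodd : (fun k => x^(2*k+1) / ((2*k+1))! * ∫ θ in (0:ℝ)..π, Real.cos θ ^ (2*k+1))
      = fun _ => (0:ℝ) := by
    funext k; rw [cos_int_odd k, mul_zero]
  have hts : (∑' n, ∫ θ, F n θ ∂μ) = π * I₀ x := by
    have h := tsum_even_add_odd (f := fun n => x^n / ((n))! * ∫ θ in (0:ℝ)..π, Real.cos θ ^ n)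
      (by rw [heven]; exact ((I0_summable x).mul_left π))
      (by rw [hodd]; exact summable_zero)
    simp only [hterm]
    rw [← h, heven, hodd, tsum_zero, add_zero, tsum_mul_left, I₀]
  rw [← hts, hswap, intervalIntegral.integral_of_le hπ.le]
  congr 1; funext θ; exact hexp θ

lemma exp_I0_repr (x : ℝ) :
    π * (Real.exp (-x) * I₀ x) = ∫ θ in (0:ℝ)..π, Real.exp (x * Real.cos θ - x) := by
  rw [show π * (Real.exp (-x) * I₀ x) = Real.exp (-x) * (π * I₀ x) by ring, I0_repr,
    ← intervalIntegral.integral_const_mul]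
  congr 1; funext θ
  rw [← Real.exp_add]; ring_nf

lemma I0_upper {x : ℝ} (hx : 0 < x) : Real.exp (-x) * I₀ x ≤ 2 / Real.sqrt x := by
  have hπ := Real.pi_pos
  have hb : (0:ℝ) < 2 * x / π ^ 2 := by positivity
  have h2 : (∫ θ in (0:ℝ)..π, Real.exp (x * Real.cos θ - x))
      ≤ ∫ θ in (0:ℝ)..π, Real.exp (-(2 * x / π ^ 2) * θ ^ 2) := by
    apply intervalIntegral.integral_mono_on hπ.le
      ((by fun_prop : Continuous fun θ : ℝ => Real.exp (x * Real.cos θ - x)).intervalIntegrable 0 π)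
      ((by fun_prop : Continuous fun θ : ℝ => Real.exp (-(2 * x / π ^ 2) * θ ^ 2)).intervalIntegrable 0 π)
    intro θ hθ
    apply Real.exp_le_exp.2
    have habs : |θ| ≤ π := by
      rw [abs_of_nonneg hθ.1]; exact hθ.2
    have hcos := Real.cos_le_one_sub_mul_cos_sq habs
    have hmul := mul_le_mul_of_nonneg_left hcos hx.le
    have e : x * (1 - 2 / π ^ 2 * θ ^ 2) - x = -(2 * x / π ^ 2) * θ ^ 2 := by ring
    linarith
  have h3 : (∫ θ in (0:ℝ)..π, Real.exp (-(2 * x / π ^ 2) * θ ^ 2))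
      ≤ Real.sqrt (π / (2 * x / π ^ 2)) := by
    rw [intervalIntegral.integral_of_le hπ.le, ← integral_gaussian (2 * x / π ^ 2)]
    exact setIntegral_le_integral (integrable_exp_neg_mul_sq hb)
      (ae_of_all _ fun θ => (Real.exp_pos _).le)
  have h4 : Real.sqrt (π / (2 * x / π ^ 2)) ≤ 2 * π / Real.sqrt x := by
    have e1 : π / (2 * x / π ^ 2) = π ^ 3 / (2 * x) := by
      field_simp
    have e2 : Real.sqrt ((2 * π) ^ 2 / x) = 2 * π / Real.sqrt x := by
      rw [Real.sqrt_div' ((2*π)^2) (by positivity), Real.sqrt_sq (by positivity)]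
    rw [e1, ← e2]
    apply Real.sqrt_le_sqrt
    rw [div_le_div_iff₀ (by positivity) hx]
    have hcube : π ^ 3 ≤ 8 * π ^ 2 := by nlinarith [Real.pi_le_four, Real.pi_pos]
    nlinarith [mul_le_mul_of_nonneg_right hcube hx.le]
  have hcomb := (exp_I0_repr x).le.trans (h2.trans (h3.trans h4))
  rw [show 2 * π / Real.sqrt x = π * (2 / Real.sqrt x) by ring] at hcomb
  exact le_of_mul_le_mul_left hcomb hπ

lemma I0_lower {x : ℝ} (hx : 1 ≤ x) : 1 / (7 * Real.sqrt x) ≤ Real.exp (-x) * I₀ x := by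
  have hπ := Real.pi_pos
  have hx0 : (0:ℝ) < x := lt_of_lt_of_le one_pos hx
  have hs0 : 0 < Real.sqrt x := Real.sqrt_pos.2 hx0
  set s : ℝ := (Real.sqrt x)⁻¹ with hs
  have hs1 : s ≤ 1 := by
    rw [hs]
    exact inv_le_one_of_one_le₀ (by simpa using Real.one_le_sqrt.2 hx)
  have hsπ : s ≤ π := hs1.trans (by linarith [Real.pi_gt_three])
  have hspos : 0 < s := by positivity
  have hss : x * s ^ 2 = 1 := by
    rw [hs]
    field_simp [Real.sq_sqrt hx0.le]
    exact (Real.sq_sqrt hx0.le).symm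
  have h1 : (s * Real.exp (-(1/2) : ℝ)) ≤ ∫ θ in (0:ℝ)..s, Real.exp (x * Real.cos θ - x) := by
    have := intervalIntegral.integral_mono_on (a := 0) (b := s) hspos.le
      (intervalIntegrable_const (μ := volume) (c := Real.exp (-(1/2) : ℝ)))
      ((by fun_prop : Continuous fun θ : ℝ => Real.exp (x * Real.cos θ - x)).intervalIntegrable 0 s)
      (fun θ hθ => by
        apply Real.exp_le_exp.2
        have hc := Real.one_sub_sq_div_two_le_cos (x := θ)
        have hθ2 : θ ^ 2 ≤ s ^ 2 := by
          apply sq_le_sq' (by linarith [hθ.1]) hθ.2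
        have : x * θ ^ 2 ≤ 1 := by
          calc x * θ ^ 2 ≤ x * s ^ 2 := by nlinarith
            _ = 1 := hss
        nlinarith)
    rw [intervalIntegral.integral_const, smul_eq_mul, sub_zero] at this
    exact this
  have h2 : (∫ θ in (0:ℝ)..s, Real.exp (x * Real.cos θ - x))
      ≤ ∫ θ in (0:ℝ)..π, Real.exp (x * Real.cos θ - x) := by
    apply intervalIntegral.integral_mono_interval le_rfl hspos.le hsπ
      (ae_of_all _ fun θ => (Real.exp_pos _).le)
      ((by fun_prop : Continuous fun θ : ℝ => Real.exp (x * Real.cos θ - x)).intervalIntegrable 0 π)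
  have hcomb : s * Real.exp (-(1/2) : ℝ) ≤ π * (Real.exp (-x) * I₀ x) := by
    rw [exp_I0_repr]; exact h1.trans h2
  have he : (1/2 : ℝ) ≤ Real.exp (-(1/2) : ℝ) := by
    have := Real.add_one_le_exp (-(1/2) : ℝ)
    linarith
  have hfin : π * (1 / (7 * Real.sqrt x)) ≤ π * (Real.exp (-x) * I₀ x) := by
    refine le_trans ?_ hcomb
    have hπ32 : π ≤ 3.2 := by linarith [Real.pi_lt_d2]
    have key : π / 7 ≤ Real.exp (-(1/2) : ℝ) := by linarith
    calc π * (1 / (7 * Real.sqrt x)) = (π / 7) * (Real.sqrt x)⁻¹ := by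
          rw [one_div, mul_inv]; ring
      _ ≤ Real.exp (-(1/2) : ℝ) * (Real.sqrt x)⁻¹ :=
          mul_le_mul_of_nonneg_right key (by positivity)
      _ = s * Real.exp (-(1/2) : ℝ) := by rw [hs]; ring
  exact le_of_mul_le_mul_left hfin hπ

lemma pow_sqrt_eq (d : ℕ) (hd : 1 ≤ d) (c : ℝ) {t : ℝ} (ht : 1 ≤ t) :
    (c / Real.sqrt (2 * t / d)) ^ d
      = (c / Real.sqrt (2 / d)) ^ d * t ^ (-(d:ℝ)/2) := by
  have ht0 : (0:ℝ) < t := lt_of_lt_of_le one_pos ht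
  have hd0 : (0:ℝ) < d := by exact_mod_cast hd
  have h2d : (0:ℝ) < 2 / d := by positivity
  have hsplit : Real.sqrt (2 * t / d) = Real.sqrt (2 / d) * Real.sqrt t := by
    rw [← Real.sqrt_mul h2d.le]
    congr 1; ring
  have hrpow : ((Real.sqrt t)⁻¹) ^ d = t ^ (-(d:ℝ)/2) := by
    rw [Real.sqrt_eq_rpow, ← Real.rpow_neg_one (t ^ ((1:ℝ)/2)),
      ← Real.rpow_natCast ((t ^ ((1:ℝ)/2)) ^ (-1:ℝ)) d,
      ← Real.rpow_mul ht0.le, ← Real.rpow_mul ht0.le]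
    congr 1
    push_cast; ring
  rw [hsplit, div_mul_eq_div_div, div_eq_mul_inv (c / Real.sqrt (2/d)), mul_pow, hrpow]

lemma rpow_integrable (d : ℕ) (hd3 : 3 ≤ d) :
    IntegrableOn (fun t : ℝ => t ^ (-(d:ℝ)/2)) (Set.Ici (1:ℝ)) := by
  rw [integrableOn_Ici_iff_integrableOn_Ioi]
  refine (integrableOn_Ioi_rpow_iff zero_lt_one).2 ?_
  have : (3:ℝ) ≤ d := by exact_mod_cast hd3
  linarith

theorem expected_collisions_finite_iff (d : ℕ) (hd : 1 ≤ d) :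
    IntegrableOn (fun t : ℝ => (Real.exp (-(2 * t / d)) * I₀ (2 * t / d)) ^ d)
      (Set.Ici (1 : ℝ)) ↔ 3 ≤ d := by
  have hd0 : (0:ℝ) < d := by exact_mod_cast hd
  set f : ℝ → ℝ := fun t => (Real.exp (-(2 * t / d)) * I₀ (2 * t / d)) ^ d with hf
  have hmeas : Measurable f := by
    apply Measurable.pow_const
    exact (Real.measurable_exp.comp (by fun_prop)).mul (measurable_I0.comp (by fun_prop))
  have hfnonneg : ∀ t, 0 ≤ f t := fun t =>
    pow_nonneg (mul_nonneg (Real.exp_pos _).le (I0_nonneg _)) d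
  constructor
  · -- integrable → 3 ≤ d
    intro h
    by_contra h3
    push_neg at h3
    have hd2 : d ≤ 2 := by omega
    have hd2' : (d:ℝ) ≤ 2 := by exact_mod_cast hd2
    set c : ℝ := ((1/7) / Real.sqrt (2 / d)) ^ d with hc
    have hcpos : 0 < c := by
      rw [hc]; positivity
    have hlow : ∀ t : ℝ, t ∈ Set.Ici (1:ℝ) → c * t ^ (-(d:ℝ)/2) ≤ f t := by
      intro t ht
      have ht1 : (1:ℝ) ≤ t := ht
      have hx1 : (1:ℝ) ≤ 2 * t / d := by
        rw [le_div_iff₀ hd0]; nlinarith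
      have hb := I0_lower hx1
      have hb' : (1/7) / Real.sqrt (2 * t / d) ≤ Real.exp (-(2 * t / d)) * I₀ (2 * t / d) := by
        rw [div_div]
        exact hb
      calc c * t ^ (-(d:ℝ)/2) = ((1/7) / Real.sqrt (2 * t / d)) ^ d := by
            rw [hc, pow_sqrt_eq d hd _ ht1]
        _ ≤ f t := pow_le_pow_left₀ (by positivity) hb' d
    -- hence t ^ (-(d:ℝ)/2) integrable on Ici 1
    have hint : IntegrableOn (fun t : ℝ => t ^ (-(d:ℝ)/2)) (Set.Ici (1:ℝ)) := by
      have hg : IntegrableOn (fun t => c⁻¹ * f t) (Set.Ici (1:ℝ)) := h.const_mul _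
      refine Integrable.mono' hg ?_ ?_
      · exact (measurable_id.pow_const _).aestronglyMeasurable
      · rw [ae_restrict_iff' measurableSet_Ici]
        refine ae_of_all _ fun t ht => ?_
        have ht0 : (0:ℝ) < t := lt_of_lt_of_le one_pos ht
        rw [Real.norm_eq_abs, abs_of_nonneg (Real.rpow_nonneg ht0.le _)]
        rw [le_inv_mul_iff₀ hcpos]
        exact hlow t ht
    rw [integrableOn_Ici_iff_integrableOn_Ioi] at hint
    have := (integrableOn_Ioi_rpow_iff zero_lt_one).1 hint
    have : (d:ℝ) > 2 := by linarith
    linarith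
  · -- 3 ≤ d → integrable
    intro hd3
    set C : ℝ := ((2:ℝ) / Real.sqrt (2 / d)) ^ d with hC
    have hup : ∀ t : ℝ, t ∈ Set.Ici (1:ℝ) → f t ≤ C * t ^ (-(d:ℝ)/2) := by
      intro t ht
      have ht1 : (1:ℝ) ≤ t := ht
      have hx0 : (0:ℝ) < 2 * t / d := by positivity
      have hb := I0_upper hx0
      calc f t ≤ ((2:ℝ) / Real.sqrt (2 * t / d)) ^ d :=
            pow_le_pow_left₀ (mul_nonneg (Real.exp_pos _).le (I0_nonneg _)) hb d
        _ = C * t ^ (-(d:ℝ)/2) := by rw [hC, pow_sqrt_eq d hd _ ht1]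
    refine Integrable.mono' ((rpow_integrable d hd3).const_mul C) hmeas.aestronglyMeasurable ?_
    rw [ae_restrict_iff' measurableSet_Ici]
    refine ae_of_all _ fun t ht => ?_
    rw [Real.norm_eq_abs, abs_of_nonneg (hfnonneg t)]
    exact hup t ht
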